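/- Let M be a finitely generated torsion module over the PID Λ = ℂ[t,t⁻¹]. Then Ext^1_Λ(M, Λ) is a torsion Λ-module, and the characteristic polynomial of the action of t on Ext^1_Λ(M, Λ) equals the characteristic polynomial of the action of t on M. -/

import Mathlib

open LaurentPolynomial

noncomputable section

/-- The `ℂ`-module structure on a `ℂ[t,t⁻¹]`-module obtained by restriction of scalars. -/
abbrev cMod (N : Type*) [AddCommGroup N] [Module (LaurentPolynomial ℂ) N] : Module ℂ N :=
  Module.compHom N (algebraMap ℂ (LaurentPolynomial ℂ))

/-- The action of `t` on a `ℂ[t,t⁻¹]`-module, as a `ℂ`-linear endomorphism. -/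
def tauT (N : Type*) [AddCommGroup N] [Module (LaurentPolynomial ℂ) N] :
    @LinearMap ℂ ℂ _ _ (RingHom.id ℂ) N N _ _ (cMod N) (cMod N) := by
  letI := cMod N
  exact
  { toFun := fun x => (T 1 : LaurentPolynomial ℂ) • x
    map_add' := fun a b => smul_add _ a b
    map_smul' := fun c x => by
      show (T 1 : LaurentPolynomial ℂ) • ((algebraMap ℂ (LaurentPolynomial ℂ) c) • x)
        = (algebraMap ℂ (LaurentPolynomial ℂ) c) • ((T 1 : LaurentPolynomial ℂ) • x)
      rw [← mul_smul, ← mul_smul, mul_comm] }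

/-- The characteristic polynomial of the action of `t` on a `ℂ[t,t⁻¹]`-module which is
finite-dimensional over `ℂ` (junk value `1` otherwise). -/
def tCharpoly (N : Type*) [AddCommGroup N] [Module (LaurentPolynomial ℂ) N] :
    Polynomial ℂ := by
  classical
  letI := cMod N
  exact if h : Module.Finite ℂ N then letI := h; LinearMap.charpoly (tauT N) else 1

/-!
Over a PID, an injective map `d : F1 → F0` of finite free modules with torsion cokernel is, by the
Smith normal form, diagonal with entries `aᵢ` in suitable bases of `F1` and `F0` of the same size.
Its dual `d*` is then diagonal with the same entries in the dual bases, so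
`coker d* ≅ ⨁ Λ ⧸ (aᵢ) ≅ coker d ≅ M`. Hence `Ext¹(M, Λ) ≅ M` as `Λ`-modules, and being torsion
and the characteristic polynomial of `t` are both invariant under `Λ`-linear isomorphisms.
`Λ` is a PID as a localization of `ℂ[t]`.
-/

theorem IsLocalization.isPrincipalIdealRing {R : Type*} [CommRing R] [IsPrincipalIdealRing R]
    (S : Submonoid R) (A : Type*) [CommRing A] [Algebra R A] [IsLocalization S A] :
    IsPrincipalIdealRing A where
  principal I := by
    obtain ⟨a, ha⟩ := IsPrincipalIdealRing.principal (I.under R)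
    refine ⟨algebraMap R A a, ?_⟩
    rw [← IsLocalization.map_under S A I, ha, Ideal.submodule_span_eq, Ideal.map_span,
      Set.image_singleton, Ideal.submodule_span_eq]

instance : IsPrincipalIdealRing (LaurentPolynomial ℂ) :=
  IsLocalization.isPrincipalIdealRing (Submonoid.powers (Polynomial.X : Polynomial ℂ)) _

theorem Module.IsTorsion.of_surjective {R A B : Type*} [CommSemiring R] [AddCommMonoid A]
    [Module R A] [AddCommMonoid B] [Module R B] (hA : Module.IsTorsion R A) (f : A →ₗ[R] B)
    (hf : Function.Surjective f) : Module.IsTorsion R B := by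
  intro y
  obtain ⟨x, rfl⟩ := hf y
  obtain ⟨a, ha⟩ := @hA x
  exact ⟨a, by rw [Submonoid.smul_def, ← map_smul, ← Submonoid.smul_def, ha, map_zero]⟩

section Diagonal

variable {R ι F0 F1 : Type*} [CommRing R] [AddCommGroup F0] [Module R F0]
  [AddCommGroup F1] [Module R F1]

theorem LinearMap.range_eq_span_smul_of_basis (b0 : Module.Basis ι R F0)
    (b1 : Module.Basis ι R F1) (a : ι → R) {d : F1 →ₗ[R] F0} (hd : ∀ i, d (b1 i) = a i • b0 i) :
    LinearMap.range d = Submodule.span R (Set.range fun i => a i • b0 i) := by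
  rw [LinearMap.range_eq_map, ← b1.span_eq, Submodule.map_span, ← Set.range_comp]
  simp only [Function.comp_def, hd]

theorem LinearMap.range_lcomp_eq_span_smul_of_basis [Finite ι] [DecidableEq ι]
    (b0 : Module.Basis ι R F0) (b1 : Module.Basis ι R F1)
    (a : ι → R) {d : F1 →ₗ[R] F0} (hd : ∀ i, d (b1 i) = a i • b0 i) :
    LinearMap.range (LinearMap.lcomp R R d) =
      Submodule.span R (Set.range fun i => a i • b1.dualBasis i) := by
  refine LinearMap.range_eq_span_smul_of_basis b1.dualBasis b0.dualBasis a fun i => ?_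
  refine b1.ext fun j => ?_
  rw [LinearMap.lcomp_apply, hd, LinearMap.smul_apply, map_smul, b0.dualBasis_apply_self,
    b1.dualBasis_apply_self]
  split_ifs with h <;> simp [h]

noncomputable def Module.Basis.quotientSpanSMulEquiv (b0 : Module.Basis ι R F0)
    (b1 : Module.Basis ι R F1) (a : ι → R) :
    (F0 ⧸ Submodule.span R (Set.range fun i => a i • b0 i)) ≃ₗ[R]
      (F1 ⧸ Submodule.span R (Set.range fun i => a i • b1 i)) :=
  Submodule.Quotient.equiv _ _ (b0.equiv b1 (Equiv.refl ι)) <| by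
    rw [Submodule.map_span, ← Set.range_comp]
    simp [Function.comp_def, Module.Basis.equiv_apply]

noncomputable def LinearMap.quotRangeLcompEquivOfBasis [Finite ι] [DecidableEq ι]
    (b0 : Module.Basis ι R F0) (b1 : Module.Basis ι R F1)
    (a : ι → R) {d : F1 →ₗ[R] F0} (hd : ∀ i, d (b1 i) = a i • b0 i) :
    ((F1 →ₗ[R] R) ⧸ LinearMap.range (LinearMap.lcomp R R d)) ≃ₗ[R] (F0 ⧸ LinearMap.range d) :=
  (Submodule.quotEquivOfEq _ _ (range_lcomp_eq_span_smul_of_basis b0 b1 a hd)).trans <|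
    (b1.dualBasis.quotientSpanSMulEquiv b0 a).trans <|
      Submodule.quotEquivOfEq _ _ (range_eq_span_smul_of_basis b0 b1 a hd).symm

end Diagonal

theorem Module.Basis.SmithNormalForm.f_surjective_of_isTorsion {R M ι : Type*} [CommRing R]
    [Nontrivial R] [AddCommGroup M] [Module R M] {N : Submodule R M} {n : ℕ}
    (snf : Module.Basis.SmithNormalForm N ι n) (hN : Module.IsTorsion R (M ⧸ N)) :
    Function.Surjective snf.f := by
  intro i
  by_contra hi
  obtain ⟨r, hr⟩ := @hN (Submodule.Quotient.mk (snf.bM i))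
  rw [Submonoid.smul_def, ← Submodule.Quotient.mk_smul, Submodule.Quotient.mk_eq_zero] at hr
  have := snf.le_ker_coord_of_notMem_range (by simpa using hi) hr
  rw [LinearMap.mem_ker, map_smul, Module.Basis.coord_apply, Module.Basis.repr_self,
    Finsupp.single_eq_same, smul_eq_mul, mul_one] at this
  exact nonZeroDivisors.coe_ne_zero r this

section PID

variable {R F0 F1 : Type*} [CommRing R] [IsDomain R] [IsPrincipalIdealRing R]
  [AddCommGroup F0] [Module R F0] [AddCommGroup F1] [Module R F1]
  [Module.Free R F0] [Module.Finite R F0] {d : F1 →ₗ[R] F0}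

theorem LinearMap.exists_basis_apply_eq_smul_of_isTorsion (hd : Function.Injective d)
    (htors : Module.IsTorsion R (F0 ⧸ LinearMap.range d)) :
    ∃ (n : ℕ) (b0 : Module.Basis (Fin n) R F0) (b1 : Module.Basis (Fin n) R F1) (a : Fin n → R),
      ∀ i, d (b1 i) = a i • b0 i := by
  obtain ⟨n, snf⟩ := (LinearMap.range d).smithNormalForm (Module.Free.chooseBasis R F0)
  let e : Fin n ≃ _ :=
    Equiv.ofBijective snf.f ⟨snf.f.injective, snf.f_surjective_of_isTorsion htors⟩
  refine ⟨n, snf.bM.reindex e.symm, snf.bN.map (LinearEquiv.ofInjective d hd).symm, snf.a,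
    fun i => ?_⟩
  rw [Module.Basis.map_apply, ← LinearEquiv.ofInjective_apply (h := hd),
    LinearEquiv.apply_symm_apply, snf.snf, Module.Basis.reindex_apply, Equiv.symm_symm]
  rfl

theorem LinearMap.nonempty_quotRangeLcomp_equiv_of_isTorsion (hd : Function.Injective d)
    (htors : Module.IsTorsion R (F0 ⧸ LinearMap.range d)) :
    Nonempty (((F1 →ₗ[R] R) ⧸ LinearMap.range (LinearMap.lcomp R R d)) ≃ₗ[R]
      (F0 ⧸ LinearMap.range d)) := by
  classical
  obtain ⟨n, b0, b1, a, h⟩ := exists_basis_apply_eq_smul_of_isTorsion hd htors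
  exact ⟨quotRangeLcompEquivOfBasis b0 b1 a h⟩

end PID

theorem tCharpoly_congr {N N' : Type*} [AddCommGroup N] [Module (LaurentPolynomial ℂ) N]
    [AddCommGroup N'] [Module (LaurentPolynomial ℂ) N'] (e : N ≃ₗ[LaurentPolynomial ℂ] N') :
    tCharpoly N = tCharpoly N' := by
  let := cMod N
  let := cMod N'
  let eC : N ≃ₗ[ℂ] N' :=
    { e with map_smul' := fun c => e.map_smul (algebraMap ℂ (LaurentPolynomial ℂ) c) }
  have hconj : tauT N' = eC.conj (tauT N) := LinearMap.ext fun x => by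
    show (T 1 : LaurentPolynomial ℂ) • x = e ((T 1 : LaurentPolynomial ℂ) • e.symm x)
    rw [map_smul, e.apply_symm_apply]
  unfold tCharpoly
  by_cases h : Module.Finite ℂ N
  · have h' : Module.Finite ℂ N' := Module.Finite.equiv eC
    rw [dif_pos h, dif_pos h', hconj, LinearEquiv.charpoly_conj]
  · have h' : ¬ Module.Finite ℂ N' := fun h' => h (Module.Finite.equiv eC.symm)
    rw [dif_neg h, dif_neg h']

theorem ext_one_torsion_and_charpoly_general
    (M : Type) [AddCommGroup M] [Module (LaurentPolynomial ℂ) M]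
    (htors : Module.IsTorsion (LaurentPolynomial ℂ) M)
    (F0 F1 : Type) [AddCommGroup F0] [Module (LaurentPolynomial ℂ) F0]
    [AddCommGroup F1] [Module (LaurentPolynomial ℂ) F1]
    [Module.Free (LaurentPolynomial ℂ) F0] [Module.Finite (LaurentPolynomial ℂ) F0]
    (d : F1 →ₗ[LaurentPolynomial ℂ] F0) (π : F0 →ₗ[LaurentPolynomial ℂ] M)
    (hd : Function.Injective d) (hπ : Function.Surjective π)
    (hex : Function.Exact d π) :
    Module.IsTorsion (LaurentPolynomial ℂ)
      ((F1 →ₗ[LaurentPolynomial ℂ] LaurentPolynomial ℂ) ⧸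
        LinearMap.range (LinearMap.lcomp (LaurentPolynomial ℂ) (LaurentPolynomial ℂ) d)) ∧
    tCharpoly
      ((F1 →ₗ[LaurentPolynomial ℂ] LaurentPolynomial ℂ) ⧸
        LinearMap.range (LinearMap.lcomp (LaurentPolynomial ℂ) (LaurentPolynomial ℂ) d)) =
      tCharpoly M := by
  let eM := hex.linearEquivOfSurjective hπ
  obtain ⟨e⟩ := d.nonempty_quotRangeLcomp_equiv_of_isTorsion hd
    (htors.of_surjective eM.symm.toLinearMap eM.symm.surjective)
  let eExt := e.trans eM
  exact ⟨htors.of_surjective eExt.symm.toLinearMap eExt.symm.surjective, tCharpoly_congr eExt⟩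

/-- For a finitely generated torsion module `M` over the PID `Λ = ℂ[t,t⁻¹]`, the module
`Ext¹_Λ(M, Λ)` — computed from any finite free resolution `0 → F1 →d F0 → M → 0` as the
cokernel of the dual map `d* : Hom(F0, Λ) → Hom(F1, Λ)` — is a torsion `Λ`-module, and
the characteristic polynomial of the action of `t` on it equals the characteristic
polynomial of the action of `t` on `M`. -/
theorem ext_one_torsion_and_charpoly
    (M : Type) [AddCommGroup M] [Module (LaurentPolynomial ℂ) M]
    [Module.Finite (LaurentPolynomial ℂ) M]
    (htors : Module.IsTorsion (LaurentPolynomial ℂ) M)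
    (F0 F1 : Type) [AddCommGroup F0] [Module (LaurentPolynomial ℂ) F0]
    [AddCommGroup F1] [Module (LaurentPolynomial ℂ) F1]
    [Module.Free (LaurentPolynomial ℂ) F0] [Module.Finite (LaurentPolynomial ℂ) F0]
    [Module.Free (LaurentPolynomial ℂ) F1] [Module.Finite (LaurentPolynomial ℂ) F1]
    (d : F1 →ₗ[LaurentPolynomial ℂ] F0) (π : F0 →ₗ[LaurentPolynomial ℂ] M)
    (hd : Function.Injective d) (hπ : Function.Surjective π)
    (hex : Function.Exact d π) :
    Module.IsTorsion (LaurentPolynomial ℂ)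
      ((F1 →ₗ[LaurentPolynomial ℂ] LaurentPolynomial ℂ) ⧸
        LinearMap.range (LinearMap.lcomp (LaurentPolynomial ℂ) (LaurentPolynomial ℂ) d)) ∧
    tCharpoly
      ((F1 →ₗ[LaurentPolynomial ℂ] LaurentPolynomial ℂ) ⧸
        LinearMap.range (LinearMap.lcomp (LaurentPolynomial ℂ) (LaurentPolynomial ℂ) d)) =
      tCharpoly M :=
  ext_one_torsion_and_charpoly_general M htors F0 F1 d π hd hπ hex

end
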